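/- Let B be a finite list of bids on n goods all of whose value vectors lie in ℤ^n, let p ∈ ℤ^n, and suppose B is locally valid at p. Fix a good i ∈ {1,…,n} and ε with 0 < |ε| < 1/4. Then: (a) B is (1/2 − |ε|)-valid at every q ∈ ℝ^n with ‖q − p‖_∞ < |ε|; and (b) the shifted bid list B_ε := { (b + ε·e^i, w) : (b,w) ∈ B } is (1/2 − 2|ε|)-valid at every q ∈ ℝ^n with ‖q − p‖_∞ < |ε|, where e^i is the i-th standard basis vector of ℝ^n. -/

import Mathlib

open Finset

noncomputable section

variable {n : ℕ}

/-- Extend a value/price vector in `ℝ^n` by a 0-th coordinate (the reject good) equal to 0. -/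
def extVec (b : Fin n → ℝ) : Fin (n + 1) → ℝ := Fin.cons 0 b

/-- Surplus of good `i` (in `{0,…,n}`) for value vector `b` at price `p`. -/
def surplus (b p : Fin n → ℝ) (i : Fin (n + 1)) : ℝ := extVec b i - extVec p i

/-- Maximal surplus over all goods (including the reject good). -/
def maxSurplus (b p : Fin n → ℝ) : ℝ :=
  Finset.univ.sup' Finset.univ_nonempty (surplus b p)

/-- The bid with value vector `b` demands good `i` at price `p`. -/
def Demands (b p : Fin n → ℝ) (i : Fin (n + 1)) : Prop :=
  ∀ j, surplus b p j ≤ surplus b p i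

open Classical in
/-- The set of goods demanded by value vector `b` at price `p`. -/
def demandedSet (b p : Fin n → ℝ) : Finset (Fin (n + 1)) :=
  Finset.univ.filter fun i => Demands b p i

/-- Indirect utility function of a bid list (bids are pairs of value vector and weight). -/
def indirectUtility (B : List ((Fin n → ℝ) × ℝ)) (p : Fin n → ℝ) : ℝ :=
  (B.map fun bw => bw.2 * maxSurplus bw.1 p).sum

/-- Surplus gap of the bid `b` at `p`: maximal surplus minus the best surplus on
a non-demanded good (junk value when every good is demanded). -/
def surplusGap (b p : Fin n → ℝ) : ℝ :=
  maxSurplus b p - sSup (surplus b p '' {i | i ∉ demandedSet b p})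

/-- `B` is `ε`-valid at `p` if its indirect utility function is convex on the open
`L∞`-ball of radius `ε` around `p`. -/
def epsValid (B : List ((Fin n → ℝ) × ℝ)) (p : Fin n → ℝ) (ε : ℝ) : Prop :=
  ConvexOn ℝ {q : Fin n → ℝ | ‖q - p‖ < ε} (indirectUtility B)

open Classical in
/-- Sum of the weights of bids in `B` that are marginal on both `i` and `i'` at `p`. -/
def marginalWeight (B : List ((Fin n → ℝ) × ℝ)) (p : Fin n → ℝ) (i i' : Fin (n + 1)) : ℝ :=
  (B.map fun bw => if Demands bw.1 p i ∧ Demands bw.1 p i' then bw.2 else 0).sum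

/-! At an integral price `p` every good a bid does not demand has surplus at least `1` below
the maximum, so for `‖v‖ < 1/2` only the goods demanded at `p` matter and
`f_B(p + v) = f_B(p) + G(v)`, where `G` is a weighted sum of maxima of linear forms over the
demanded goods. `G` is positively homogeneous, so convexity of `f_B` on some small ball around `p`
makes `G` convex everywhere, and hence `f_B` convex on the whole `1/2`-ball around `p`. Both
claims then follow by inclusion of balls, since shifting every bid by `ε • e^i` translates the
argument of `f_B`. -/

open Metric

lemma convexOn_univ_of_convexOn_ball_of_posHomog {E : Type*} [SeminormedAddCommGroup E]
    [NormedSpace ℝ E] {g : E → ℝ} (hg : ∀ t : ℝ, 0 < t → ∀ v, g (t • v) = t * g v) {r : ℝ}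
    (hr : 0 < r) (h : ConvexOn ℝ (ball 0 r) g) : ConvexOn ℝ Set.univ g := by
  refine ⟨convex_univ, fun x _ y _ a b ha hb hab => ?_⟩
  have hsmall : ∀ z : E, ∀ᶠ t in nhdsWithin (0 : ℝ) (Set.Ioi 0), t • z ∈ ball (0 : E) r :=
    fun z => (((continuous_id.smul continuous_const).tendsto' 0 0 (zero_smul ℝ z)).mono_left
      nhdsWithin_le_nhds).eventually (ball_mem_nhds 0 hr)
  obtain ⟨t, ⟨hx, hy⟩, ht⟩ := (((hsmall x).and (hsmall y)).and self_mem_nhdsWithin).exists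
  have ht : (0 : ℝ) < t := ht
  calc g (a • x + b • y) = t⁻¹ * g (a • (t • x) + b • (t • y)) := by
        rw [smul_comm a t x, smul_comm b t y, ← smul_add, hg t ht, inv_mul_cancel_left₀ ht.ne']
    _ ≤ t⁻¹ * (a • g (t • x) + b • g (t • y)) :=
        mul_le_mul_of_nonneg_left (h.2 hx hy ha hb hab) (inv_nonneg.2 ht.le)
    _ = a • g x + b • g y := by
        rw [hg t ht x, hg t ht y, smul_eq_mul, smul_eq_mul, smul_eq_mul, smul_eq_mul]
        field_simp

lemma extVec_add (b v : Fin n → ℝ) : extVec (b + v) = extVec b + extVec v := by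
  ext j
  induction j using Fin.cases <;> simp [extVec]

lemma extVec_smul (t : ℝ) (v : Fin n → ℝ) : extVec (t • v) = t • extVec v := by
  ext j
  induction j using Fin.cases <;> simp [extVec]

lemma abs_extVec_le_norm (v : Fin n → ℝ) (j : Fin (n + 1)) : |extVec v j| ≤ ‖v‖ := by
  induction j using Fin.cases with
  | zero => simp [extVec]
  | succ k => simpa [extVec] using norm_le_pi_norm v k

lemma surplus_add_right (b p v : Fin n → ℝ) (j : Fin (n + 1)) :
    surplus b (p + v) j = surplus b p j - extVec v j := by
  simp only [surplus, extVec_add, Pi.add_apply]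
  ring

lemma surplus_add_add (b p v : Fin n → ℝ) : surplus (b + v) (v + p) = surplus b p := by
  ext j
  simp only [surplus, extVec_add, Pi.add_apply]
  ring

lemma surplus_le_maxSurplus (b p : Fin n → ℝ) (j : Fin (n + 1)) :
    surplus b p j ≤ maxSurplus b p :=
  le_sup' _ (mem_univ j)

lemma mem_demandedSet_iff {b p : Fin n → ℝ} {j : Fin (n + 1)} :
    j ∈ demandedSet b p ↔ maxSurplus b p ≤ surplus b p j := by
  classical
  simp only [demandedSet, mem_filter, mem_univ, true_and, maxSurplus, sup'_le_iff, forall_const]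
  rfl

lemma surplus_eq_maxSurplus_of_mem {b p : Fin n → ℝ} {j : Fin (n + 1)}
    (hj : j ∈ demandedSet b p) : surplus b p j = maxSurplus b p :=
  (surplus_le_maxSurplus b p j).antisymm (mem_demandedSet_iff.1 hj)

lemma exists_surplus_eq_maxSurplus (b p : Fin n → ℝ) :
    ∃ j, surplus b p j = maxSurplus b p := by
  obtain ⟨j, -, hj⟩ := exists_mem_eq_sup' univ_nonempty (surplus b p)
  exact ⟨j, hj.symm⟩

lemma demandedSet_nonempty (b p : Fin n → ℝ) : (demandedSet b p).Nonempty := by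
  obtain ⟨j, hj⟩ := exists_surplus_eq_maxSurplus b p
  exact ⟨j, mem_demandedSet_iff.2 hj.ge⟩

lemma exists_int_surplus_eq {b p : Fin n → ℝ} (hb : ∀ k, ∃ m : ℤ, b k = m)
    (hp : ∀ k, ∃ m : ℤ, p k = m) (j : Fin (n + 1)) : ∃ m : ℤ, surplus b p j = m := by
  induction j using Fin.cases with
  | zero => exact ⟨0, by simp [surplus, extVec]⟩
  | succ k =>
    obtain ⟨m₁, h₁⟩ := hb k
    obtain ⟨m₂, h₂⟩ := hp k
    exact ⟨m₁ - m₂, by simp [surplus, extVec, h₁, h₂]⟩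

lemma surplus_add_one_le_maxSurplus {b p : Fin n → ℝ} (hb : ∀ k, ∃ m : ℤ, b k = m)
    (hp : ∀ k, ∃ m : ℤ, p k = m) {j : Fin (n + 1)} (hj : j ∉ demandedSet b p) :
    surplus b p j + 1 ≤ maxSurplus b p := by
  obtain ⟨k, hk⟩ := exists_surplus_eq_maxSurplus b p
  obtain ⟨m, hm⟩ := exists_int_surplus_eq hb hp j
  obtain ⟨M, hM⟩ := exists_int_surplus_eq hb hp k
  have hlt : surplus b p j < maxSurplus b p :=
    (surplus_le_maxSurplus b p j).lt_of_ne fun h => hj (mem_demandedSet_iff.2 h.ge)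
  rw [← hk, hM, hm] at hlt ⊢
  exact_mod_cast Int.add_one_le_of_lt (by exact_mod_cast hlt)

def maxSurplusDirDeriv (b p v : Fin n → ℝ) : ℝ :=
  (demandedSet b p).sup' (demandedSet_nonempty b p) fun j => -extVec v j

lemma maxSurplusDirDeriv_smul (b p v : Fin n → ℝ) {t : ℝ} (ht : 0 ≤ t) :
    maxSurplusDirDeriv b p (t • v) = t * maxSurplusDirDeriv b p v := by
  rw [maxSurplusDirDeriv, maxSurplusDirDeriv, mul_comm, sup'_mul₀ ht]
  simp only [extVec_smul, Pi.smul_apply, smul_eq_mul]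
  congr! 1 with j
  ring

lemma maxSurplus_add_of_norm_lt_half {b p : Fin n → ℝ} (hb : ∀ k, ∃ m : ℤ, b k = m)
    (hp : ∀ k, ∃ m : ℤ, p k = m) {v : Fin n → ℝ} (hv : ‖v‖ < 1 / 2) :
    maxSurplus b (p + v) = maxSurplus b p + maxSurplusDirDeriv b p v := by
  refine le_antisymm (sup'_le _ _ fun j _ => ?_) ?_
  · rw [surplus_add_right]
    have hle : ∀ k ∈ demandedSet b p, -extVec v k ≤ maxSurplusDirDeriv b p v :=
      fun k hk => le_sup' (fun j => -extVec v j) hk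
    by_cases hj : j ∈ demandedSet b p
    · linarith [surplus_eq_maxSurplus_of_mem hj, hle j hj]
    · obtain ⟨k, hk⟩ := demandedSet_nonempty b p
      have hgap := surplus_add_one_le_maxSurplus hb hp hj
      have hvj := abs_le.1 (abs_extVec_le_norm v j)
      have hvk := abs_le.1 (abs_extVec_le_norm v k)
      linarith [hle k hk]
  · obtain ⟨k, hk, hD⟩ := exists_mem_eq_sup' (demandedSet_nonempty b p) fun j => -extVec v j
    calc maxSurplus b p + maxSurplusDirDeriv b p v = surplus b (p + v) k := by
          rw [maxSurplusDirDeriv, hD, surplus_add_right, surplus_eq_maxSurplus_of_mem hk]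
          ring
      _ ≤ maxSurplus b (p + v) := surplus_le_maxSurplus _ _ _

def indirectUtilityDirDeriv (B : List ((Fin n → ℝ) × ℝ)) (p v : Fin n → ℝ) : ℝ :=
  (B.map fun bw => bw.2 * maxSurplusDirDeriv bw.1 p v).sum

lemma indirectUtilityDirDeriv_smul (B : List ((Fin n → ℝ) × ℝ)) (p : Fin n → ℝ) {t : ℝ}
    (ht : 0 ≤ t) (v : Fin n → ℝ) :
    indirectUtilityDirDeriv B p (t • v) = t * indirectUtilityDirDeriv B p v := by
  simp only [indirectUtilityDirDeriv, maxSurplusDirDeriv_smul _ _ _ ht, mul_left_comm _ t,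
    List.sum_map_mul_left]

lemma indirectUtility_add_of_norm_lt_half {B : List ((Fin n → ℝ) × ℝ)}
    (hint : ∀ bw ∈ B, ∀ k, ∃ m : ℤ, bw.1 k = m) {p : Fin n → ℝ} (hp : ∀ k, ∃ m : ℤ, p k = m)
    {v : Fin n → ℝ} (hv : ‖v‖ < 1 / 2) :
    indirectUtility B (p + v) = indirectUtility B p + indirectUtilityDirDeriv B p v := by
  rw [indirectUtility, indirectUtility, indirectUtilityDirDeriv, ← List.sum_map_add]
  congr 1
  refine List.map_congr_left fun bw hbw => ?_
  rw [maxSurplus_add_of_norm_lt_half (hint bw hbw) hp hv, mul_add]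

lemma indirectUtility_map_add_add (B : List ((Fin n → ℝ) × ℝ)) (e q : Fin n → ℝ) :
    indirectUtility (B.map fun bw => (bw.1 + e, bw.2)) (e + q) = indirectUtility B q := by
  simp only [indirectUtility, List.map_map, Function.comp_def, maxSurplus, surplus_add_add]

lemma epsValid_iff_convexOn_ball {B : List ((Fin n → ℝ) × ℝ)} {p : Fin n → ℝ} {r : ℝ} :
    epsValid B p r ↔ ConvexOn ℝ (ball p r) (indirectUtility B) := by
  simp only [epsValid, ball, dist_eq_norm]

theorem epsValid_half_of_locallyValid {B : List ((Fin n → ℝ) × ℝ)}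
    (hint : ∀ bw ∈ B, ∀ k, ∃ m : ℤ, bw.1 k = m) {p : Fin n → ℝ} (hp : ∀ k, ∃ m : ℤ, p k = m)
    (hvalid : ∃ δ > 0, epsValid B p δ) : epsValid B p (1 / 2) := by
  obtain ⟨δ, hδ, hconv⟩ := hvalid
  have hUG : ∀ v : Fin n → ℝ, ‖v‖ < 1 / 2 →
      indirectUtility B (p + v) = indirectUtilityDirDeriv B p v + indirectUtility B p :=
    fun v hv => by rw [indirectUtility_add_of_norm_lt_half hint hp hv, add_comm]
  have hG_near : ConvexOn ℝ (ball 0 (min δ (1 / 2))) (indirectUtilityDirDeriv B p) := by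
    refine ((((epsValid_iff_convexOn_ball.1 hconv).translate_right p).add_const
      (-indirectUtility B p)).subset (fun v hv => ?_) (convex_ball _ _)).congr fun v hv => ?_
    · rw [mem_ball_zero_iff, lt_min_iff] at hv
      simpa [dist_eq_norm] using hv.1
    · rw [mem_ball_zero_iff, lt_min_iff] at hv
      rw [Pi.add_apply, Function.comp_apply, hUG v hv.2, add_neg_cancel_right]
  have hG : ConvexOn ℝ Set.univ (indirectUtilityDirDeriv B p) :=
    convexOn_univ_of_convexOn_ball_of_posHomog
      (fun t ht => indirectUtilityDirDeriv_smul B p ht.le) (by positivity) hG_near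
  rw [epsValid_iff_convexOn_ball]
  refine (((hG.translate_right (-p)).add_const (indirectUtility B p)).subset (fun _ _ => trivial)
    (convex_ball _ _)).congr fun q hq => ?_
  rw [mem_ball_iff_norm, ← neg_add_eq_sub] at hq
  rw [Pi.add_apply, Function.comp_apply, ← hUG _ hq, add_neg_cancel_left]

lemma epsValid.mono_ball {B : List ((Fin n → ℝ) × ℝ)} {p q : Fin n → ℝ} {r r' : ℝ}
    (h : epsValid B p r) (hq : r' + ‖q - p‖ ≤ r) : epsValid B q r' := by
  rw [epsValid_iff_convexOn_ball] at h ⊢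
  exact h.subset (ball_subset_ball' (by rwa [dist_eq_norm])) (convex_ball _ _)

lemma epsValid_map_add {B : List ((Fin n → ℝ) × ℝ)} {p : Fin n → ℝ} {r : ℝ}
    (h : epsValid B p r) (e : Fin n → ℝ) :
    epsValid (B.map fun bw => (bw.1 + e, bw.2)) (e + p) r := by
  rw [epsValid_iff_convexOn_ball] at h ⊢
  refine ((h.translate_right (-e)).subset ?_ (convex_ball _ _)).congr fun x _ => ?_
  · rw [preimage_add_ball, sub_neg_eq_add, add_comm]
  · rw [Function.comp_apply, ← indirectUtility_map_add_add B e (-e + x), add_neg_cancel_left]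

theorem stmt7_general (n : ℕ) (B : List ((Fin n → ℝ) × ℝ))
    (hint : ∀ bw ∈ B, ∀ k, ∃ m : ℤ, bw.1 k = m)
    (p : Fin n → ℝ) (hp : ∀ k, ∃ m : ℤ, p k = m)
    (hvalid : ∃ δ > 0, epsValid B p δ)
    (i : Fin n) (ε : ℝ) :
    (∀ q : Fin n → ℝ, ‖q - p‖ < |ε| → epsValid B q (1 / 2 - |ε|)) ∧
    (∀ q : Fin n → ℝ, ‖q - p‖ < |ε| →
      epsValid (B.map fun bw => (fun k => bw.1 k + if k = i then ε else 0, bw.2)) q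
        (1 / 2 - 2 * |ε|)) := by
  have hhalf := epsValid_half_of_locallyValid hint hp hvalid
  refine ⟨fun q hq => hhalf.mono_ball (by linarith), fun q hq => ?_⟩
  set e : Fin n → ℝ := fun k => if k = i then ε else 0
  have he : ‖e‖ = |ε| := by
    rw [show e = Pi.single i ε from funext fun k => by simp [e, Pi.single_apply],
      Pi.norm_single, Real.norm_eq_abs]
  refine (epsValid_map_add hhalf e).mono_ball ?_
  rw [← sub_sub, sub_right_comm]
  linarith [norm_sub_le (q - p) e]

/-- Let `B` be a list of bids with integral value vectors, `p ∈ ℤ^n`, and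
suppose `B` is locally valid at `p`. Fix a good `i` and `ε` with `0 < |ε| < 1/4`. Then
(a) `B` is `(1/2 − |ε|)`-valid at every `q` with `‖q − p‖_∞ < |ε|`; and (b) the bid list
obtained by shifting every bid of `B` by `ε·e^i` is `(1/2 − 2|ε|)`-valid at every such `q`. -/
theorem stmt7 (n : ℕ) (hn : 1 ≤ n) (B : List ((Fin n → ℝ) × ℝ))
    (hw : ∀ bw ∈ B, bw.2 = 1 ∨ bw.2 = -1)
    (hint : ∀ bw ∈ B, ∀ k, ∃ m : ℤ, bw.1 k = m)
    (p : Fin n → ℝ) (hp : ∀ k, ∃ m : ℤ, p k = m)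
    (hvalid : ∃ δ > 0, epsValid B p δ)
    (i : Fin n) (ε : ℝ) (hε0 : ε ≠ 0) (hε : |ε| < 1 / 4) :
    (∀ q : Fin n → ℝ, ‖q - p‖ < |ε| → epsValid B q (1 / 2 - |ε|)) ∧
    (∀ q : Fin n → ℝ, ‖q - p‖ < |ε| →
      epsValid (B.map fun bw => (fun k => bw.1 k + if k = i then ε else 0, bw.2)) q
        (1 / 2 - 2 * |ε|)) :=
  stmt7_general n B hint p hp hvalid i ε

end
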